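/- arXiv:2604.11345 — 5 statements merged into one kernel-verified Lean document; each statement's English description precedes it below -/
import Mathlib

section
/- Under the Weierstrass decomposition, historical data, and persistent excitation hypotheses, a triple of sequences u : ℕ → ℝ^m, x : ℕ → ℝ^n, y : ℕ → ℝ^p is a trajectory of the descriptor system (i.e. E x(k+1) = A x(k) + B u(k) and y(k) = C x(k) for all k ∈ ℕ) if and only if for every k ∈ ℕ the stacked vector col(x(k), x(k+1), u(k), y(k), y(k+1)) ∈ ℝ^{2n+m+2p} lies in the column space (real span of the columns) of the stacked data matrix col(X_p, X_f, U_p, Y_p, Y_f) ∈ ℝ^{(2n+m+2p)×T}. -/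
open Matrix

noncomputable section

/-- Data matrix of depth `T` whose `k`-th column is `f (k + off)`. -/
def histMat {ι : Type} (T : ℕ) (f : ℕ → ι → ℝ) (off : ℕ) : Matrix ι (Fin T) ℝ :=
  Matrix.of fun i k => f ((k : ℕ) + off) i

/-- A real square matrix is Schur stable if every complex eigenvalue has modulus `< 1`. -/
def SchurStable {n : ℕ} (M : Matrix (Fin n) (Fin n) ℝ) : Prop :=
  ∀ μ ∈ spectrum ℂ (M.map (fun r : ℝ => (r : ℂ))), ‖μ‖ < 1

/-- View a real matrix as a complex matrix. -/
def cmap {a b : Type} (M : Matrix a b ℝ) : Matrix a b ℂ := M.map (fun r => (r : ℂ))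

/-!
In Weierstrass coordinates `P⁻¹ x = (z₁, z₂)` the nilpotency of `R` forces the fast state of every
solution to be `z₂(k) = -∑_{j<s} R^j B₂ u(k+j)`. Hence `x(k)`, `x(k+1)`, `u(k)`, `y(k)`, `y(k+1)`
are the images of the extended state `(z₁(k), u(k), …, u(k+s))` under fixed linear maps, the same
maps for the data and for any trajectory. Persistent excitation says that the extended data states
span the whole extended state space, so some combination `g` of data columns has the extended state
of the trajectory at time `k`, and the linear maps carry this over to all five blocks. Conversely,
the descriptor and output equations are linear and hold for every data column, hence for every
combination of them.
-/

open Finset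

section HistMat

variable {ι κ μ : Type} {T : ℕ}

lemma histMat_mulVec (f : ℕ → ι → ℝ) (off : ℕ) (g : Fin T → ℝ) :
    histMat T f off *ᵥ g = ∑ t : Fin T, g t • f (t + off) := by
  ext i
  simp [histMat, mulVec, dotProduct, mul_comm]

lemma histMat_mulVec_eq_map (L : (ι → ℝ) →ₗ[ℝ] κ → ℝ) {f : ℕ → κ → ℝ} {w : ℕ → ι → ℝ}
    {off off' : ℕ} (h : ∀ t < T, f (t + off) = L (w (t + off'))) (g : Fin T → ℝ) :
    histMat T f off *ᵥ g = L (histMat T w off' *ᵥ g) := by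
  simp only [histMat_mulVec, map_sum, map_smul]
  exact sum_congr rfl fun t _ => by rw [h t t.isLt]

lemma mulVec_histMat_one_mulVec [Fintype ι] [Fintype μ] {E A : Matrix κ ι ℝ} {B : Matrix κ μ ℝ}
    {x : ℕ → ι → ℝ} {u : ℕ → μ → ℝ} (h : ∀ t < T, E *ᵥ x (t + 1) = A *ᵥ x t + B *ᵥ u t)
    (g : Fin T → ℝ) :
    E *ᵥ (histMat T x 1 *ᵥ g) = A *ᵥ (histMat T x 0 *ᵥ g) + B *ᵥ (histMat T u 0 *ᵥ g) := by
  simp only [histMat_mulVec, mulVec_sum, mulVec_smul, add_zero, ← sum_add_distrib, ← smul_add]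
  exact sum_congr rfl fun t _ => by rw [h t t.isLt]

lemma exists_mulVec_eq_of_rank_eq_card [Fintype ι] (W : Matrix ι (Fin T) ℝ)
    (h : W.rank = Fintype.card ι) (v : ι → ℝ) : ∃ g, W *ᵥ g = v := by
  have : LinearMap.range W.mulVecLin = ⊤ :=
    Submodule.eq_top_of_finrank_eq (by rw [← Matrix.rank, h, Module.finrank_fintype_fun_eq_card])
  exact LinearMap.range_eq_top.1 this v

end HistMat

section Nilpotent

variable {ι μ : Type*} [Fintype ι] [DecidableEq ι] [Fintype μ]

def fastState (R : Matrix ι ι ℝ) (B : Matrix ι μ ℝ) (s : ℕ) (u : ℕ → μ → ℝ) (k : ℕ) : ι → ℝ :=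
  -∑ j ∈ range s, (R ^ j * B) *ᵥ u (k + j)

variable {R : Matrix ι ι ℝ} {B : Matrix ι μ ℝ} {s : ℕ}

lemma mulVec_fastState_succ (hR : R ^ s = 0) (u : ℕ → μ → ℝ) (k : ℕ) :
    R *ᵥ fastState R B s u (k + 1) = fastState R B s u k + B *ᵥ u k := by
  have hshift : ∑ j ∈ range s, R *ᵥ ((R ^ j * B) *ᵥ u (k + 1 + j))
      = ∑ j ∈ range (s + 1), (R ^ j * B) *ᵥ u (k + j) - B *ᵥ u k := by
    rw [sum_range_succ', pow_zero, Matrix.one_mul, add_zero, add_sub_cancel_right]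
    refine sum_congr rfl fun j _ => ?_
    rw [mulVec_mulVec, ← Matrix.mul_assoc, ← pow_succ', add_right_comm, add_assoc]
  rw [fastState, mulVec_neg, mulVec_sum, hshift, sum_range_succ, hR, Matrix.zero_mul, zero_mulVec,
    add_zero, fastState]
  abel

lemma eq_fastState_of_mulVec_succ (hR : R ^ s = 0) {z : ℕ → ι → ℝ} {u : ℕ → μ → ℝ}
    (h : ∀ k, R *ᵥ z (k + 1) = z k + B *ᵥ u k) (k : ℕ) : z k = fastState R B s u k := by
  have hiter : ∀ t, z k = R ^ t *ᵥ z (k + t) - ∑ j ∈ range t, (R ^ j * B) *ᵥ u (k + j) := by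
    intro t
    induction t with
    | zero => simp
    | succ t ih =>
      rw [ih, sum_range_succ, eq_sub_of_add_eq (h (k + t)).symm, mulVec_sub, mulVec_mulVec,
        mulVec_mulVec, ← pow_succ, ← add_assoc]
      abel
  rw [hiter s, hR, zero_mulVec, zero_sub, fastState]

end Nilpotent

section ExtendedState

variable {n1 n2 m s : ℕ}

def extendedState (s : ℕ) (z : ℕ → Fin n1 → ℝ) (u : ℕ → Fin m → ℝ) (k : ℕ) :
    Fin n1 ⊕ (Fin (s + 1) × Fin m) → ℝ :=
  Sum.elim (z k) fun jl => u (k + jl.1) jl.2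

def slowPart : (Fin n1 ⊕ (Fin (s + 1) × Fin m) → ℝ) →ₗ[ℝ] Fin n1 → ℝ :=
  LinearMap.funLeft ℝ ℝ Sum.inl

def inputPart (j : Fin (s + 1)) : (Fin n1 ⊕ (Fin (s + 1) × Fin m) → ℝ) →ₗ[ℝ] Fin m → ℝ :=
  LinearMap.funLeft ℝ ℝ fun l => Sum.inr (j, l)

def fastPart (R : Matrix (Fin n2) (Fin n2) ℝ) (B2 : Matrix (Fin n2) (Fin m) ℝ)
    (shift : Fin s → Fin (s + 1)) : (Fin n1 ⊕ (Fin (s + 1) × Fin m) → ℝ) →ₗ[ℝ] Fin n2 → ℝ :=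
  -∑ j : Fin s, (R ^ (j : ℕ) * B2).mulVecLin ∘ₗ inputPart (shift j)

def stateOfParts {W : Type*} [AddCommMonoid W] [Module ℝ W]
    (P : Matrix (Fin (n1 + n2)) (Fin (n1 + n2)) ℝ) (f1 : W →ₗ[ℝ] Fin n1 → ℝ)
    (f2 : W →ₗ[ℝ] Fin n2 → ℝ) : W →ₗ[ℝ] Fin (n1 + n2) → ℝ :=
  P.mulVecLin ∘ₗ LinearMap.funLeft ℝ ℝ finSumFinEquiv.symm ∘ₗ
    (LinearEquiv.sumArrowLequivProdArrow _ _ ℝ ℝ).symm.toLinearMap ∘ₗ f1.prod f2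

lemma stateOfParts_apply {W : Type*} [AddCommMonoid W] [Module ℝ W]
    (P : Matrix (Fin (n1 + n2)) (Fin (n1 + n2)) ℝ) (f1 : W →ₗ[ℝ] Fin n1 → ℝ)
    (f2 : W →ₗ[ℝ] Fin n2 → ℝ) (w : W) :
    stateOfParts P f1 f2 w = P *ᵥ (Sum.elim (f1 w) (f2 w) ∘ finSumFinEquiv.symm) := rfl

lemma inputPart_extendedState (z : ℕ → Fin n1 → ℝ) (u : ℕ → Fin m → ℝ) (k : ℕ)
    (j : Fin (s + 1)) :
    inputPart j (extendedState s z u k) = u (k + j) := rfl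

lemma fastPart_castSucc_extendedState (R : Matrix (Fin n2) (Fin n2) ℝ)
    (B2 : Matrix (Fin n2) (Fin m) ℝ) (z : ℕ → Fin n1 → ℝ) (u : ℕ → Fin m → ℝ) (k : ℕ) :
    fastPart R B2 Fin.castSucc (extendedState s z u k) = fastState R B2 s u k := by
  simp [fastPart, fastState, inputPart_extendedState,
    Fin.sum_univ_eq_sum_range (fun j => (R ^ j * B2) *ᵥ u (k + j))]

lemma fastPart_succ_extendedState (R : Matrix (Fin n2) (Fin n2) ℝ)
    (B2 : Matrix (Fin n2) (Fin m) ℝ) (z : ℕ → Fin n1 → ℝ) (u : ℕ → Fin m → ℝ) (k : ℕ) :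
    fastPart R B2 Fin.succ (extendedState s z u k) = fastState R B2 s u (k + 1) := by
  simp [fastPart, fastState, inputPart_extendedState, add_assoc, add_comm 1,
    Fin.sum_univ_eq_sum_range (fun j => (R ^ j * B2) *ᵥ u (k + (j + 1)))]

variable (P : Matrix (Fin (n1 + n2)) (Fin (n1 + n2)) ℝ) (A1 : Matrix (Fin n1) (Fin n1) ℝ)
  (B1 : Matrix (Fin n1) (Fin m) ℝ) (R : Matrix (Fin n2) (Fin n2) ℝ) (B2 : Matrix (Fin n2) (Fin m) ℝ)

def currentState : (Fin n1 ⊕ (Fin (s + 1) × Fin m) → ℝ) →ₗ[ℝ] Fin (n1 + n2) → ℝ :=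
  stateOfParts P slowPart (fastPart R B2 Fin.castSucc)

def nextState : (Fin n1 ⊕ (Fin (s + 1) × Fin m) → ℝ) →ₗ[ℝ] Fin (n1 + n2) → ℝ :=
  stateOfParts P (A1.mulVecLin ∘ₗ slowPart + B1.mulVecLin ∘ₗ inputPart 0) (fastPart R B2 Fin.succ)

variable {P A1 B1 R B2} {z1 : ℕ → Fin n1 → ℝ} {z2 : ℕ → Fin n2 → ℝ} {u : ℕ → Fin m → ℝ} {k : ℕ}

lemma mulVec_sumElim_eq_currentState (h2 : z2 k = fastState R B2 s u k) :
    P *ᵥ (Sum.elim (z1 k) (z2 k) ∘ finSumFinEquiv.symm)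
      = currentState P R B2 (extendedState s z1 u k) := by
  rw [currentState, stateOfParts_apply, fastPart_castSucc_extendedState, ← h2]
  rfl

lemma mulVec_sumElim_eq_nextState (h1 : z1 (k + 1) = A1 *ᵥ z1 k + B1 *ᵥ u k)
    (h2 : z2 (k + 1) = fastState R B2 s u (k + 1)) :
    P *ᵥ (Sum.elim (z1 (k + 1)) (z2 (k + 1)) ∘ finSumFinEquiv.symm)
      = nextState P A1 B1 R B2 (extendedState s z1 u k) := by
  rw [nextState, stateOfParts_apply, fastPart_succ_extendedState, ← h2, h1]
  rfl

end ExtendedState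

lemma mulVec_comp_symm_of_submatrix_eq {α β γ δ : Type*} [Fintype β] [Fintype δ]
    {M : Matrix α β ℝ} {N : Matrix γ δ ℝ} {e₁ : γ ≃ α} {e₂ : δ ≃ β} (h : M.submatrix e₁ e₂ = N)
    (v : δ → ℝ) : M *ᵥ (v ∘ e₂.symm) = (N *ᵥ v) ∘ e₁.symm := by
  rw [← h, submatrix_mulVec_equiv, Function.comp_assoc, e₁.self_comp_symm, Function.comp_id]

section Weierstrass

variable {n1 n2 m : ℕ} {E A S P : Matrix (Fin (n1 + n2)) (Fin (n1 + n2)) ℝ}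
  {B : Matrix (Fin (n1 + n2)) (Fin m) ℝ} {A1 : Matrix (Fin n1) (Fin n1) ℝ}
  {R : Matrix (Fin n2) (Fin n2) ℝ} {B1 : Matrix (Fin n1) (Fin m) ℝ} {B2 : Matrix (Fin n2) (Fin m) ℝ}

lemma descriptor_eq_iff (hS : IsUnit S)
    (hE : (S * E * P).submatrix finSumFinEquiv finSumFinEquiv = fromBlocks 1 0 0 R)
    (hA : (S * A * P).submatrix finSumFinEquiv finSumFinEquiv = fromBlocks A1 0 0 1)
    (hB : (S * B).submatrix finSumFinEquiv id = fromRows B1 B2)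
    (a1 b1 : Fin n1 → ℝ) (a2 b2 : Fin n2 → ℝ) (c : Fin m → ℝ) :
    E *ᵥ (P *ᵥ (Sum.elim a1 a2 ∘ finSumFinEquiv.symm))
        = A *ᵥ (P *ᵥ (Sum.elim b1 b2 ∘ finSumFinEquiv.symm)) + B *ᵥ c ↔
      a1 = A1 *ᵥ b1 + B1 *ᵥ c ∧ R *ᵥ a2 = b2 + B2 *ᵥ c := by
  rw [← (mulVec_injective_iff_isUnit.2 hS).eq_iff, mulVec_add]
  simp only [mulVec_mulVec, ← Matrix.mul_assoc]
  have hB' : (S * B) *ᵥ c = (fromRows B1 B2 *ᵥ c) ∘ finSumFinEquiv.symm :=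
    mulVec_comp_symm_of_submatrix_eq (e₂ := Equiv.refl _) hB c
  rw [mulVec_comp_symm_of_submatrix_eq hE, mulVec_comp_symm_of_submatrix_eq hA, hB', ← Pi.add_comp,
    (finSumFinEquiv.symm.surjective.injective_comp_right).eq_iff]
  simp only [fromBlocks_mulVec, fromRows_mulVec, Sum.elim_comp_inl, Sum.elim_comp_inr, one_mulVec,
    zero_mulVec, add_zero, zero_add]
  rw [← Sum.elim_add_add, Sum.elim_eq_iff]

lemma exists_mulVec_sumElim_eq (hP : IsUnit P) (x : ℕ → Fin (n1 + n2) → ℝ) :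
    ∃ (z1 : ℕ → Fin n1 → ℝ) (z2 : ℕ → Fin n2 → ℝ),
      ∀ k, x k = P *ᵥ (Sum.elim (z1 k) (z2 k) ∘ finSumFinEquiv.symm) := by
  refine ⟨fun k => ((P⁻¹ *ᵥ x k) ∘ finSumFinEquiv) ∘ Sum.inl,
    fun k => ((P⁻¹ *ᵥ x k) ∘ finSumFinEquiv) ∘ Sum.inr, fun k => ?_⟩
  rw [Sum.elim_comp_inl_inr, Function.comp_assoc, Equiv.self_comp_symm, Function.comp_id,
    mulVec_mulVec, mul_nonsing_inv P ((isUnit_iff_isUnit_det P).1 hP), one_mulVec]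

lemma exists_extendedState_of_descriptor {s : ℕ} (hS : IsUnit S) (hP : IsUnit P)
    (hE : (S * E * P).submatrix finSumFinEquiv finSumFinEquiv = fromBlocks 1 0 0 R)
    (hA : (S * A * P).submatrix finSumFinEquiv finSumFinEquiv = fromBlocks A1 0 0 1)
    (hB : (S * B).submatrix finSumFinEquiv id = fromRows B1 B2) (hR : R ^ s = 0)
    {x : ℕ → Fin (n1 + n2) → ℝ} {u : ℕ → Fin m → ℝ}
    (hdyn : ∀ k, E *ᵥ x (k + 1) = A *ᵥ x k + B *ᵥ u k) :
    ∃ z1 : ℕ → Fin n1 → ℝ, ∀ k, x k = currentState P R B2 (extendedState s z1 u k) ∧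
      x (k + 1) = nextState P A1 B1 R B2 (extendedState s z1 u k) := by
  obtain ⟨z1, z2, hx⟩ := exists_mulVec_sumElim_eq hP x
  have hcoord k := (descriptor_eq_iff hS hE hA hB (z1 (k + 1)) (z1 k) (z2 (k + 1)) (z2 k) (u k)).1
    (by rw [← hx, ← hx]; exact hdyn k)
  have hfast := eq_fastState_of_mulVec_succ hR fun k => (hcoord k).2
  refine ⟨z1, fun k => ⟨?_, ?_⟩⟩
  · rw [hx]
    exact mulVec_sumElim_eq_currentState (hfast k)
  · rw [hx]
    exact mulVec_sumElim_eq_nextState (hcoord k).1 (hfast (k + 1))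

end Weierstrass

theorem stmt_0_general (n1 n2 s m p T : ℕ)
    (E A : Matrix (Fin (n1 + n2)) (Fin (n1 + n2)) ℝ)
    (B : Matrix (Fin (n1 + n2)) (Fin m) ℝ)
    (C : Matrix (Fin p) (Fin (n1 + n2)) ℝ)
    (S P : Matrix (Fin (n1 + n2)) (Fin (n1 + n2)) ℝ)
    (hS : IsUnit S) (hP : IsUnit P)
    (A1 : Matrix (Fin n1) (Fin n1) ℝ) (R : Matrix (Fin n2) (Fin n2) ℝ)
    (B1 : Matrix (Fin n1) (Fin m) ℝ) (B2 : Matrix (Fin n2) (Fin m) ℝ)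
    (hR : R ^ s = 0)
    (hE : (S * E * P).submatrix ⇑finSumFinEquiv ⇑finSumFinEquiv = Matrix.fromBlocks 1 0 0 R)
    (hA : (S * A * P).submatrix ⇑finSumFinEquiv ⇑finSumFinEquiv = Matrix.fromBlocks A1 0 0 1)
    (hB : (S * B).submatrix ⇑finSumFinEquiv id = Matrix.fromRows B1 B2)
    (ud : ℕ → Fin m → ℝ) (z1d : ℕ → Fin n1 → ℝ) (z2d : ℕ → Fin n2 → ℝ)
    (xd : ℕ → Fin (n1 + n2) → ℝ) (yd : ℕ → Fin p → ℝ)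
    (hz1 : ∀ k < T, z1d (k + 1) = A1 *ᵥ z1d k + B1 *ᵥ ud k)
    (hz2 : ∀ k ≤ T, z2d k = -(∑ j ∈ Finset.range s, ((R ^ j * B2) *ᵥ ud (k + j))))
    (hxd : ∀ k ≤ T, xd k = P *ᵥ (fun i => Sum.elim (z1d k) (z2d k) (finSumFinEquiv.symm i)))
    (hyd : ∀ k ≤ T, yd k = C *ᵥ xd k)
    (hPE : (Matrix.of fun (i : Fin n1 ⊕ (Fin (s + 1) × Fin m)) (k : Fin T) =>
        Sum.elim (z1d (k : ℕ))
          (fun jl => ud ((k : ℕ) + (jl.1 : ℕ)) jl.2) i).rank = n1 + (s + 1) * m)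
    (u : ℕ → Fin m → ℝ) (x : ℕ → Fin (n1 + n2) → ℝ) (y : ℕ → Fin p → ℝ) :
    ((∀ k : ℕ, E *ᵥ x (k + 1) = A *ᵥ x k + B *ᵥ u k) ∧ (∀ k : ℕ, y k = C *ᵥ x k))
      ↔ (∀ k : ℕ, ∃ g : Fin T → ℝ,
          histMat T xd 0 *ᵥ g = x k ∧
          histMat T xd 1 *ᵥ g = x (k + 1) ∧
          histMat T ud 0 *ᵥ g = u k ∧
          histMat T yd 0 *ᵥ g = y k ∧
          histMat T yd 1 *ᵥ g = y (k + 1)) := by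
  have hcur t (ht : t < T) : xd t = currentState P R B2 (extendedState s z1d ud t) := by
    rw [hxd t ht.le]
    exact mulVec_sumElim_eq_currentState (hz2 t ht.le)
  have hnext t (ht : t < T) : xd (t + 1) = nextState P A1 B1 R B2 (extendedState s z1d ud t) := by
    rw [hxd (t + 1) ht]
    exact mulVec_sumElim_eq_nextState (hz1 t ht) (hz2 (t + 1) ht)
  have hdyn_data t (ht : t < T) : E *ᵥ xd (t + 1) = A *ᵥ xd t + B *ᵥ ud t := by
    rw [hxd t ht.le, hxd (t + 1) ht, hz2 t ht.le, hz2 (t + 1) ht]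
    exact (descriptor_eq_iff hS hE hA hB _ _ _ _ _).2 ⟨hz1 t ht, mulVec_fastState_succ hR ud t⟩
  have hout c (hc : c ≤ 1) g : histMat T yd c *ᵥ g = C *ᵥ (histMat T xd c *ᵥ g) :=
    histMat_mulVec_eq_map C.mulVecLin (fun t ht => hyd _ (by omega)) g
  -- `hPE` is the rank of `histMat T (extendedState s z1d ud) 0`, unfolded
  have hspan : (histMat T (extendedState s z1d ud) 0).rank
      = Fintype.card (Fin n1 ⊕ (Fin (s + 1) × Fin m)) := by
    simp only [Fintype.card_sum, Fintype.card_prod, Fintype.card_fin]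
    exact hPE
  constructor
  · rintro ⟨hdyn, hy⟩ k
    obtain ⟨z1, hx⟩ := exists_extendedState_of_descriptor hS hP hE hA hB hR hdyn
    obtain ⟨g, hg⟩ := exists_mulVec_eq_of_rank_eq_card _ hspan (extendedState s z1 u k)
    have hx0 : histMat T xd 0 *ᵥ g = x k := by
      rw [histMat_mulVec_eq_map _ (off' := 0) hcur, hg, (hx k).1]
    have hx1 : histMat T xd 1 *ᵥ g = x (k + 1) := by
      rw [histMat_mulVec_eq_map _ (off' := 0) hnext, hg, (hx k).2]
    have hu0 : histMat T ud 0 *ᵥ g = u k := by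
      rw [histMat_mulVec_eq_map (inputPart 0) (w := extendedState s z1d ud) (off' := 0)
        (fun t _ => rfl), hg]
      rfl
    exact ⟨g, hx0, hx1, hu0, by rw [hout 0 zero_le_one, hx0, hy], by rw [hout 1 le_rfl, hx1, hy]⟩
  · intro h
    refine ⟨fun k => ?_, fun k => ?_⟩
    · obtain ⟨g, hx0, hx1, hu0, -, -⟩ := h k
      rw [← hx0, ← hx1, ← hu0]
      exact mulVec_histMat_one_mulVec hdyn_data g
    · obtain ⟨g, hx0, -, -, hy0, -⟩ := h k
      rw [← hy0, ← hx0, hout 0 zero_le_one]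

theorem stmt_0 (n1 n2 s m p T : ℕ) (hs : 1 ≤ s) (hT : 1 ≤ T)
    (E A : Matrix (Fin (n1 + n2)) (Fin (n1 + n2)) ℝ)
    (B : Matrix (Fin (n1 + n2)) (Fin m) ℝ)
    (C : Matrix (Fin p) (Fin (n1 + n2)) ℝ)
    (S P : Matrix (Fin (n1 + n2)) (Fin (n1 + n2)) ℝ)
    (hS : IsUnit S) (hP : IsUnit P)
    (A1 : Matrix (Fin n1) (Fin n1) ℝ) (R : Matrix (Fin n2) (Fin n2) ℝ)
    (B1 : Matrix (Fin n1) (Fin m) ℝ) (B2 : Matrix (Fin n2) (Fin m) ℝ)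
    (C1 : Matrix (Fin p) (Fin n1) ℝ) (C2 : Matrix (Fin p) (Fin n2) ℝ)
    (hR : R ^ s = 0)
    (hE : (S * E * P).submatrix ⇑finSumFinEquiv ⇑finSumFinEquiv = Matrix.fromBlocks 1 0 0 R)
    (hA : (S * A * P).submatrix ⇑finSumFinEquiv ⇑finSumFinEquiv = Matrix.fromBlocks A1 0 0 1)
    (hB : (S * B).submatrix ⇑finSumFinEquiv id = Matrix.fromRows B1 B2)
    (hC : (C * P).submatrix id ⇑finSumFinEquiv = Matrix.fromCols C1 C2)
    (ud : ℕ → Fin m → ℝ) (z1d : ℕ → Fin n1 → ℝ) (z2d : ℕ → Fin n2 → ℝ)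
    (xd : ℕ → Fin (n1 + n2) → ℝ) (yd : ℕ → Fin p → ℝ)
    (hz1 : ∀ k < T, z1d (k + 1) = A1 *ᵥ z1d k + B1 *ᵥ ud k)
    (hz2 : ∀ k ≤ T, z2d k = -(∑ j ∈ Finset.range s, ((R ^ j * B2) *ᵥ ud (k + j))))
    (hxd : ∀ k ≤ T, xd k = P *ᵥ (fun i => Sum.elim (z1d k) (z2d k) (finSumFinEquiv.symm i)))
    (hyd : ∀ k ≤ T, yd k = C *ᵥ xd k)
    (hPE : (Matrix.of fun (i : Fin n1 ⊕ (Fin (s + 1) × Fin m)) (k : Fin T) =>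
        Sum.elim (z1d (k : ℕ))
          (fun jl => ud ((k : ℕ) + (jl.1 : ℕ)) jl.2) i).rank = n1 + (s + 1) * m)
    (u : ℕ → Fin m → ℝ) (x : ℕ → Fin (n1 + n2) → ℝ) (y : ℕ → Fin p → ℝ) :
    ((∀ k : ℕ, E *ᵥ x (k + 1) = A *ᵥ x k + B *ᵥ u k) ∧ (∀ k : ℕ, y k = C *ᵥ x k))
      ↔ (∀ k : ℕ, ∃ g : Fin T → ℝ,
          histMat T xd 0 *ᵥ g = x k ∧
          histMat T xd 1 *ᵥ g = x (k + 1) ∧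
          histMat T ud 0 *ᵥ g = u k ∧
          histMat T yd 0 *ᵥ g = y k ∧
          histMat T yd 1 *ᵥ g = y (k + 1)) :=
  stmt_0_general n1 n2 s m p T E A B C S P hS hP A1 R B1 B2 hR hE hA hB ud z1d z2d xd yd hz1 hz2 hxd
    hyd hPE u x y
end
end

section
/- Let E, A ∈ ℝ^{n×n}, B ∈ ℝ^{n×m}, C ∈ ℝ^{p×n}, and assume the (n+p) × n stacked matrix col(E, C) has rank n. Then, for historical data generated by the descriptor system, every g ∈ ℝ^T with X_p·g = 0, U_p·g = 0 and Y_f·g = 0 satisfies X_f·g = 0; equivalently, there exist matrices M1 ∈ ℝ^{n×n}, M2 ∈ ℝ^{n×m}, M3 ∈ ℝ^{n×p} such that X_f = M1·X_p + M2·U_p + M3·Y_f. -/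
open Matrix

noncomputable section

/-!
Since `col(E, C)` has full column rank it has a left inverse `L = [L₁ L₂]`. Stacking the state
and output equations gives `col(E, C) X_f = col(A X_p + B U_p, Y_f)`, so
`X_f = L₁ A X_p + L₁ B U_p + L₂ Y_f`, and the kernel inclusion follows.
-/

theorem Matrix.ker_mulVecLin_eq_bot_of_rank_eq_card {K m n : Type*} [Field K] [Fintype m]
    [Fintype n] {D : Matrix m n K} (hD : D.rank = Fintype.card n) :
    LinearMap.ker D.mulVecLin = ⊥ := by
  have h := LinearMap.finrank_range_add_finrank_ker D.mulVecLin
  rw [Module.finrank_fintype_fun_eq_card, ← Matrix.rank, hD] at h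
  exact Submodule.finrank_eq_zero.mp (by omega)

theorem Matrix.exists_mul_eq_one_of_rank_eq_card {K m n : Type*} [Field K] [Fintype m]
    [Fintype n] [DecidableEq n] {D : Matrix m n K}
    (hD : D.rank = Fintype.card n) : ∃ L : Matrix n m K, L * D = 1 := by
  classical
  obtain ⟨g, hg⟩ := D.mulVecLin.exists_leftInverse_of_injective
    (Matrix.ker_mulVecLin_eq_bot_of_rank_eq_card hD)
  refine ⟨LinearMap.toMatrix' g, ?_⟩
  apply Matrix.toLin'.injective
  rw [Matrix.toLin'_mul, Matrix.toLin'_toMatrix', Matrix.toLin'_apply', hg, Matrix.toLin'_one]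

theorem Matrix.eq_toCols_mul_add_toCols_mul {R l m n p : Type*} [CommRing R] [Fintype m] [Fintype n]
    [Fintype p] [DecidableEq n] {E : Matrix m n R} {C : Matrix p n R} {L : Matrix n (m ⊕ p) R}
    (hL : L * fromRows E C = 1) {X : Matrix n l R} {Z₁ : Matrix m l R} {Z₂ : Matrix p l R}
    (hE : E * X = Z₁) (hC : C * X = Z₂) : X = L.toCols₁ * Z₁ + L.toCols₂ * Z₂ := by
  calc X = (L * fromRows E C) * X := by rw [hL, Matrix.one_mul]
    _ = fromCols L.toCols₁ L.toCols₂ * fromRows Z₁ Z₂ := by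
      rw [Matrix.mul_assoc, fromRows_mul, hE, hC, fromCols_toCols]
    _ = L.toCols₁ * Z₁ + L.toCols₂ * Z₂ := fromCols_mul_fromRows _ _ _ _

theorem mul_histMat {ι κ : Type} [Fintype ι] (T : ℕ) (M : Matrix κ ι ℝ)
    (f : ℕ → ι → ℝ) (off : ℕ) :
    M * histMat T f off = histMat T (fun k => M *ᵥ f k) off := by
  ext i k
  simp [histMat, mul_apply, mulVec, dotProduct]

theorem stmt_2_general (n m p T : ℕ)
    (E A : Matrix (Fin n) (Fin n) ℝ) (B : Matrix (Fin n) (Fin m) ℝ)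
    (C : Matrix (Fin p) (Fin n) ℝ)
    (hEC : (Matrix.fromRows E C).rank = n)
    (xd : ℕ → Fin n → ℝ) (ud : ℕ → Fin m → ℝ) (yd : ℕ → Fin p → ℝ)
    (hdyn : ∀ k < T, E *ᵥ xd (k + 1) = A *ᵥ xd k + B *ᵥ ud k)
    (hyd : ∀ k ≤ T, yd k = C *ᵥ xd k) :
    (∀ g : Fin T → ℝ, histMat T xd 0 *ᵥ g = 0 → histMat T ud 0 *ᵥ g = 0 →
        histMat T yd 1 *ᵥ g = 0 → histMat T xd 1 *ᵥ g = 0) ∧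
    (∃ (M1 : Matrix (Fin n) (Fin n) ℝ) (M2 : Matrix (Fin n) (Fin m) ℝ)
        (M3 : Matrix (Fin n) (Fin p) ℝ),
      histMat T xd 1 = M1 * histMat T xd 0 + M2 * histMat T ud 0 + M3 * histMat T yd 1) := by
  obtain ⟨L, hL⟩ := exists_mul_eq_one_of_rank_eq_card (hEC.trans (Fintype.card_fin n).symm)
  have hE : E * histMat T xd 1 = A * histMat T xd 0 + B * histMat T ud 0 := by
    simp only [mul_histMat]
    ext i k
    simpa [histMat] using congrFun (hdyn k k.isLt) i
  have hC : C * histMat T xd 1 = histMat T yd 1 := by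
    rw [mul_histMat]
    ext i k
    simp [histMat, hyd (k + 1) k.isLt]
  have hXf := eq_toCols_mul_add_toCols_mul hL hE hC
  refine ⟨fun g hXp hUp hYf => ?_, L.toCols₁ * A, L.toCols₁ * B, L.toCols₂, ?_⟩
  · simp [hXf, add_mulVec, ← mulVec_mulVec, hXp, hUp, hYf]
  · rw [hXf, Matrix.mul_add, Matrix.mul_assoc, Matrix.mul_assoc]

theorem stmt_2 (n m p T : ℕ) (hT : 1 ≤ T)
    (E A : Matrix (Fin n) (Fin n) ℝ) (B : Matrix (Fin n) (Fin m) ℝ)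
    (C : Matrix (Fin p) (Fin n) ℝ)
    (hEC : (Matrix.fromRows E C).rank = n)
    (xd : ℕ → Fin n → ℝ) (ud : ℕ → Fin m → ℝ) (yd : ℕ → Fin p → ℝ)
    (hdyn : ∀ k < T, E *ᵥ xd (k + 1) = A *ᵥ xd k + B *ᵥ ud k)
    (hyd : ∀ k ≤ T, yd k = C *ᵥ xd k) :
    (∀ g : Fin T → ℝ, histMat T xd 0 *ᵥ g = 0 → histMat T ud 0 *ᵥ g = 0 →
        histMat T yd 1 *ᵥ g = 0 → histMat T xd 1 *ᵥ g = 0) ∧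
    (∃ (M1 : Matrix (Fin n) (Fin n) ℝ) (M2 : Matrix (Fin n) (Fin m) ℝ)
        (M3 : Matrix (Fin n) (Fin p) ℝ),
      histMat T xd 1 = M1 * histMat T xd 0 + M2 * histMat T ud 0 + M3 * histMat T yd 1) :=
  stmt_2_general n m p T E A B C hEC xd ud yd hdyn hyd
end
end

section
/- Let X_p, X_f ∈ ℝ^{n×T}, U_p ∈ ℝ^{m×T}, Y_p, Y_f ∈ ℝ^{p×T}, and C ∈ ℝ^{p×n} with Y_p = C·X_p. Suppose there exist matrices Σ_{X_p} ∈ ℝ^{n×n}, Σ_{U_p} ∈ ℝ^{n×m}, Σ_{Y_p} ∈ ℝ^{n×p}, Σ_{Y_f} ∈ ℝ^{n×p} such that X_f = Σ_{X_p}·X_p + Σ_{U_p}·U_p + Σ_{Y_p}·Y_p + Σ_{Y_f}·Y_f and Σ_{X_p} is Schur stable. Then for every λ ∈ ℂ with |λ| ≥ 1, the rank over ℂ of the stacked matrix col(λ·X_p − X_f, U_p, Y_p, Y_f) equals the rank of the stacked matrix col(X_p, U_p, Y_f) (where the real matrices are viewed as complex matrices). -/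
open Matrix

noncomputable section

/-!
Since `Xf = SXp Xp + SUp Up + SYp Yp + SYf Yf`, the first block row is
`λ Xp - Xf = (λ - SXp) Xp - SUp Up - SYp Yp - SYf Yf`, so the stacked matrix is obtained from
`col(Xp, Up, Yp, Yf)` by a block upper triangular row operation with diagonal blocks `λ - SXp`
and `1`. For `|λ| ≥ 1`, Schur stability makes `λ - SXp` invertible, so the rank is unchanged.
Finally the rows of `Yp = C Xp` lie in the row space of `Xp` and can be dropped.
-/

open Submodule

namespace Matrix

variable {K : Type*} {l m o q n : Type*}

lemma span_range_row_fromRows [Semiring K] (A : Matrix m n K) (B : Matrix o n K) :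
    span K (Set.range (fromRows A B).row) =
      span K (Set.range A.row) ⊔ span K (Set.range B.row) := by
  rw [← span_union]
  exact congrArg (span K) (Set.Sum.elim_range A B)

lemma span_range_row_mul_le [CommSemiring K] [Fintype m] (A : Matrix l m K) (B : Matrix m n K) :
    span K (Set.range (A * B).row) ≤ span K (Set.range B.row) := by
  rw [span_le, ← range_vecMulLinear]
  rintro _ ⟨i, rfl⟩
  exact ⟨A i, rfl⟩

lemma rank_fromRows_fromRows_fromRows_mul [Field K] [Fintype l] [Finite m] [Finite o] [Finite q]
    [Fintype n] (A : Matrix l n K) (B : Matrix m n K) (C : Matrix o l K) (E : Matrix q n K) :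
    (fromRows A (fromRows B (fromRows (C * A) E))).rank = (fromRows A (fromRows B E)).rank := by
  have hspan : span K (Set.range (fromRows A (fromRows B (fromRows (C * A) E))).row) =
      span K (Set.range (fromRows A (fromRows B E)).row) := by
    simp only [span_range_row_fromRows]
    rw [sup_left_comm (span K (Set.range B.row)), ← sup_assoc,
      sup_eq_left.2 (span_range_row_mul_le C A)]
  rw [rank_eq_finrank_span_row, rank_eq_finrank_span_row, hspan]

lemma rank_fromRows_mul_add_mul [CommRing K] [Fintype m] [DecidableEq m] [Fintype o]
    [DecidableEq o] [Fintype n] {D : Matrix m m K} (hD : IsUnit D.det) (X : Matrix m n K)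
    (F : Matrix m o K) (Y : Matrix o n K) :
    (fromRows (D * X + F * Y) Y).rank = (fromRows X Y).rank := by
  have hblocks : fromRows (D * X + F * Y) Y = fromBlocks D F 0 1 * fromRows X Y := by
    simp [fromBlocks_mul_fromRows]
  rw [hblocks, rank_mul_eq_right_of_isUnit_det]
  simpa [det_fromBlocks_zero₂₁] using hD

end Matrix

lemma cmap_mul {a b c : Type} [Fintype b] (M : Matrix a b ℝ) (N : Matrix b c ℝ) :
    cmap (M * N) = cmap M * cmap N :=
  Matrix.map_mul (f := Complex.ofRealHom)

lemma cmap_add {a b : Type} (M N : Matrix a b ℝ) : cmap (M + N) = cmap M + cmap N :=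
  Matrix.map_add _ (map_add Complex.ofRealHom) M N

lemma SchurStable.isUnit_det_smul_one_sub {n : ℕ} {M : Matrix (Fin n) (Fin n) ℝ}
    (hM : SchurStable M) {lam : ℂ} (hlam : 1 ≤ ‖lam‖) : IsUnit (lam • 1 - cmap M).det := by
  have hlam_notMem : lam ∉ spectrum ℂ (cmap M) := fun h => (hM lam h).not_ge hlam
  rw [spectrum.notMem_iff, Algebra.algebraMap_eq_smul_one] at hlam_notMem
  exact (isUnit_iff_isUnit_det _).mp hlam_notMem

theorem stmt_3 (n m p T : ℕ)
    (Xp Xf : Matrix (Fin n) (Fin T) ℝ) (Up : Matrix (Fin m) (Fin T) ℝ)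
    (Yp Yf : Matrix (Fin p) (Fin T) ℝ) (C : Matrix (Fin p) (Fin n) ℝ)
    (hYp : Yp = C * Xp)
    (SXp : Matrix (Fin n) (Fin n) ℝ) (SUp : Matrix (Fin n) (Fin m) ℝ)
    (SYp SYf : Matrix (Fin n) (Fin p) ℝ)
    (hSig : Xf = SXp * Xp + SUp * Up + SYp * Yp + SYf * Yf)
    (hSchur : SchurStable SXp) :
    ∀ lam : ℂ, 1 ≤ ‖lam‖ →
      (Matrix.fromRows (lam • cmap Xp - cmap Xf)
        (Matrix.fromRows (cmap Up) (Matrix.fromRows (cmap Yp) (cmap Yf)))).rank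
      = (Matrix.fromRows (cmap Xp) (Matrix.fromRows (cmap Up) (cmap Yf))).rank := by
  intro lam hlam
  have hXf : lam • cmap Xp - cmap Xf = (lam • 1 - cmap SXp) * cmap Xp
      + fromCols (-cmap SUp) (fromCols (-cmap SYp) (-cmap SYf))
        * fromRows (cmap Up) (fromRows (cmap Yp) (cmap Yf)) := by
    simp only [hSig, cmap_add, cmap_mul, fromCols_mul_fromRows, Matrix.sub_mul, Matrix.smul_mul,
      Matrix.one_mul, Matrix.neg_mul]
    abel
  rw [hXf, rank_fromRows_mul_add_mul (hSchur.isUnit_det_smul_one_sub hlam), hYp, cmap_mul,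
    rank_fromRows_fromRows_fromRows_mul]
end
end

section
/- Assume the Weierstrass decomposition, historical data, and persistent excitation hypotheses, and set Q = [B2, R·B2, …, R^{s−1}·B2] ∈ ℝ^{n2×(s·m)}. Then rank col(X_p, U_p, Y_f) = n1 + m + rank( col(R, C2) · Q ), where col(R, C2) ∈ ℝ^{(n2+p)×n2} is the vertical stacking of R and C2. -/
/-!
In Weierstrass coordinates the fast state is a moving average of future inputs,
`z₂(k) = -Q (u(k), …, u(k+s-1))`, and since `R ^ s = 0` this can be rewritten as
`z₂(k) = -B₂ u(k) - R Q (u(k+1), …, u(k+s))`. Hence each column `(x(k), u(k), y(k+1))` of the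
data matrix is, up to the invertible map `P` on the state block and a reordering of rows,
`G w(k)` with `w(k) = (z₁(k), u(k), u(k+1), …, u(k+s))` and the block lower triangular
`G = [[I, 0], [X, -col(R, C₂) Q]]`. Persistent excitation says the `w(k)` span the whole space,
so the data matrix has the rank of `G`, which is `n₁ + m + rank (col(R, C₂) Q)`.
-/

open Matrix

noncomputable section

open Module

namespace Matrix

variable {K : Type*} {l m n o : Type*}

theorem mul_transpose_of [NonUnitalNonAssocSemiring K] {κ : Type*} [Fintype n] (M : Matrix m n K)
    (v : κ → n → K) : M * (of v)ᵀ = (of fun k => M *ᵥ v k)ᵀ := rfl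

theorem rank_neg [CommRing K] [Fintype n] (A : Matrix m n K) : (-A).rank = A.rank := by
  rw [← neg_one_smul K A]
  exact rank_smul_of_mem_nonZeroDivisors A isUnit_one.neg.mem_nonZeroDivisors

variable [Field K]

theorem rank_mul_eq_left_of_rank_eq_card [Fintype m] [Fintype n] (M : Matrix l m K)
    (W : Matrix m n K) (hW : W.rank = Fintype.card m) : (M * W).rank = M.rank := by
  have hsurj : LinearMap.range W.mulVecLin = ⊤ :=
    Submodule.eq_top_of_finrank_eq (by rw [← rank, hW, finrank_pi])
  rw [rank, rank, mulVecLin_mul, LinearMap.range_comp_of_range_eq_top _ hsurj]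

theorem rank_fromBlocks_zero_zero [Fintype l] [Fintype m] [Fintype n] [Fintype o]
    (A : Matrix l n K) (D : Matrix m o K) : (fromBlocks A 0 0 D).rank = A.rank + D.rank := by
  classical
  have hmul : (fromBlocks A 0 0 D).mulVecLin =
      (LinearEquiv.sumArrowLequivProdArrow l m K K).symm.toLinearMap ∘ₗ
        (A.mulVecLin.prodMap D.mulVecLin) ∘ₗ
        (LinearEquiv.sumArrowLequivProdArrow n o K K).toLinearMap := by
    refine LinearMap.ext fun x => ?_
    ext (i | i) <;> simp [fromBlocks_mulVec, Function.comp_def] <;> rfl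
  have hprod (p : Submodule K (l → K)) (q : Submodule K (m → K)) :
      finrank K (p.prod q) = finrank K p + finrank K q := by
    rw [← p.range_subtype, ← q.range_subtype, ← LinearMap.range_prodMap,
      LinearMap.finrank_range_of_inj, finrank_prod, p.range_subtype, q.range_subtype]
    exact Prod.map_injective.mpr ⟨p.injective_subtype, q.injective_subtype⟩
  rw [rank, hmul, LinearMap.range_comp, LinearMap.range_comp, LinearEquiv.range,
    Submodule.map_top, LinearMap.range_prodMap, LinearEquiv.finrank_map_eq, hprod, rank, rank]

theorem rank_fromBlocks_one_zero [Fintype l] [Fintype m] [Fintype n] [DecidableEq l]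
    (X : Matrix m l K) (N : Matrix m n K) :
    (fromBlocks (1 : Matrix l l K) 0 X N).rank = Fintype.card l + N.rank := by
  classical
  have hfac : fromBlocks (1 : Matrix l l K) 0 X N =
      (fromBlocks 1 0 X 1 : Matrix (l ⊕ m) (l ⊕ m) K) *
        (fromBlocks 1 0 0 N : Matrix (l ⊕ m) (l ⊕ n) K) := by
    rw [fromBlocks_multiply]
    simp
  rw [hfac, rank_mul_eq_right_of_isUnit_det _ _ (by simp), rank_fromBlocks_zero_zero, rank_one]

end Matrix

section Controllability

variable {K ι : Type*}

def inputWindow (s : ℕ) (u : ℕ → ι → K) (k : ℕ) : Fin s × ι → K :=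
  fun jl => u (k + jl.1) jl.2

def finSuccProdEquiv (s : ℕ) (ι : Type*) : ι ⊕ Fin s × ι ≃ Fin (s + 1) × ι where
  toFun := Sum.elim (fun l => (0, l)) fun jl => (jl.1.succ, jl.2)
  invFun jl := Fin.cases (Sum.inl jl.2) (fun j => Sum.inr (j, jl.2)) jl.1
  left_inv := by rintro (l | ⟨j, l⟩) <;> simp
  right_inv := by
    rintro ⟨j, l⟩
    induction j using Fin.cases <;> simp

def windowShiftEquiv (α : Type*) (s : ℕ) (ι : Type*) :
    (α ⊕ ι) ⊕ Fin s × ι ≃ α ⊕ Fin (s + 1) × ι :=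
  (Equiv.sumAssoc _ _ _).trans (Equiv.sumCongr (Equiv.refl α) (finSuccProdEquiv s ι))

theorem sumElim_inputWindow_comp_windowShiftEquiv {α : Type*} (z : α → K) (s : ℕ)
    (u : ℕ → ι → K) (k : ℕ) :
    Sum.elim z (inputWindow (s + 1) u k) ∘ windowShiftEquiv α s ι =
      Sum.elim (Sum.elim z (u k)) (inputWindow s u (k + 1)) := by
  ext ((a | l) | ⟨j, l⟩)
  · rfl
  · simp [windowShiftEquiv, finSuccProdEquiv, inputWindow]
  · simp [windowShiftEquiv, finSuccProdEquiv, inputWindow, add_assoc, add_comm 1]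

variable [CommRing K] [Fintype ι] {n : Type*} [Fintype n] [DecidableEq n]

def controllabilityMatrix (R : Matrix n n K) (B : Matrix n ι K) (s : ℕ) :
    Matrix n (Fin s × ι) K :=
  of fun i jl => (R ^ (jl.1 : ℕ) * B) i jl.2

theorem controllabilityMatrix_mulVec_inputWindow (R : Matrix n n K) (B : Matrix n ι K) (s : ℕ)
    (u : ℕ → ι → K) (k : ℕ) :
    controllabilityMatrix R B s *ᵥ inputWindow s u k =
      ∑ j ∈ Finset.range s, (R ^ j * B) *ᵥ u (k + j) := by
  ext i
  simp only [mulVec, dotProduct, controllabilityMatrix, inputWindow, of_apply,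
    Fintype.sum_prod_type, Finset.sum_apply]
  exact Fin.sum_univ_eq_sum_range (fun j => ∑ l, (R ^ j * B) i l * u (k + j) l) s

theorem controllabilityMatrix_mulVec_inputWindow_eq_add {R : Matrix n n K} {s : ℕ}
    (hR : R ^ s = 0) (B : Matrix n ι K) (u : ℕ → ι → K) (k : ℕ) :
    controllabilityMatrix R B s *ᵥ inputWindow s u k =
      B *ᵥ u k + R *ᵥ (controllabilityMatrix R B s *ᵥ inputWindow s u (k + 1)) := by
  have hsplit := Finset.sum_range_succ' (fun j => (R ^ j * B) *ᵥ u (k + j)) s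
  rw [Finset.sum_range_succ, hR, Matrix.zero_mul, zero_mulVec, add_zero] at hsplit
  rw [controllabilityMatrix_mulVec_inputWindow, controllabilityMatrix_mulVec_inputWindow, hsplit,
    add_comm, mulVec_sum]
  simp only [pow_zero, Matrix.one_mul, add_zero, mulVec_mulVec, pow_succ', Matrix.mul_assoc,
    add_assoc, add_comm 1]

end Controllability

section DataFactor

variable {K : Type*} {n₁ n₂ ι o : Type*} [Fintype n₁] [Fintype n₂] [Fintype ι]
  [DecidableEq n₁] [DecidableEq n₂] [DecidableEq ι]

/-- Sends `(z₁(k), u(k), u(k+1), …, u(k+s))` to `(z₁(k), u(k), z₂(k), y(k+1))`, see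
`dataFactor_mulVec`. -/
def dataFactor [CommRing K] (A₁ : Matrix n₁ n₁ K) (B₁ : Matrix n₁ ι K) (R : Matrix n₂ n₂ K)
    (B₂ : Matrix n₂ ι K) (C₁ : Matrix o n₁ K) (C₂ : Matrix o n₂ K) (s : ℕ) :
    Matrix ((n₁ ⊕ ι) ⊕ (n₂ ⊕ o)) ((n₁ ⊕ ι) ⊕ (Fin s × ι)) K :=
  fromBlocks 1 0 (fromBlocks 0 (-B₂) (C₁ * A₁) (C₁ * B₁))
    (-(fromRows R C₂ * controllabilityMatrix R B₂ s))

theorem dataFactor_mulVec [CommRing K] (A₁ : Matrix n₁ n₁ K) (B₁ : Matrix n₁ ι K)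
    (R : Matrix n₂ n₂ K) (B₂ : Matrix n₂ ι K) (C₁ : Matrix o n₁ K) (C₂ : Matrix o n₂ K) (s : ℕ)
    (a : n₁ → K) (v : ι → K) (w : Fin s × ι → K) :
    dataFactor A₁ B₁ R B₂ C₁ C₂ s *ᵥ Sum.elim (Sum.elim a v) w =
      Sum.elim (Sum.elim a v)
        (Sum.elim (-(B₂ *ᵥ v + R *ᵥ (controllabilityMatrix R B₂ s *ᵥ w)))
          (C₁ *ᵥ (A₁ *ᵥ a + B₁ *ᵥ v) - C₂ *ᵥ (controllabilityMatrix R B₂ s *ᵥ w))) := by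
  ext ((i | i) | (i | i)) <;>
    simp [dataFactor, fromBlocks_mulVec, fromRows_mulVec, mulVec_add, neg_mulVec,
      ← mulVec_mulVec] <;> ring

theorem rank_dataFactor [Field K] [Fintype o] (A₁ : Matrix n₁ n₁ K) (B₁ : Matrix n₁ ι K)
    (R : Matrix n₂ n₂ K) (B₂ : Matrix n₂ ι K) (C₁ : Matrix o n₁ K) (C₂ : Matrix o n₂ K) (s : ℕ) :
    (dataFactor A₁ B₁ R B₂ C₁ C₂ s).rank =
      Fintype.card n₁ + Fintype.card ι + (fromRows R C₂ * controllabilityMatrix R B₂ s).rank := by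
  rw [dataFactor, rank_fromBlocks_one_zero, rank_neg, Fintype.card_sum]

end DataFactor

section WeierstrassCoordinates

variable {K : Type*} [CommRing K] {n₁ n₂ : ℕ} {ι o : Type*}

def weierstrassPerm (n₁ n₂ : ℕ) (ι o : Type*) :
    Fin (n₁ + n₂) ⊕ (ι ⊕ o) ≃ (Fin n₁ ⊕ ι) ⊕ (Fin n₂ ⊕ o) :=
  (Equiv.sumCongr finSumFinEquiv.symm (Equiv.refl _)).trans (Equiv.sumSumSumComm _ _ _ _)

theorem fromBlocks_mulVec_comp_weierstrassPerm [Fintype ι] [Fintype o] [DecidableEq ι]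
    [DecidableEq o] (P : Matrix (Fin (n₁ + n₂)) (Fin (n₁ + n₂)) K) (a : Fin n₁ → K)
    (b : Fin n₂ → K) (v : ι → K) (y : o → K) :
    fromBlocks P 0 0 1 *ᵥ (Sum.elim (Sum.elim a v) (Sum.elim b y) ∘ weierstrassPerm n₁ n₂ ι o) =
      Sum.elim (P *ᵥ fun i => Sum.elim a b (finSumFinEquiv.symm i)) (Sum.elim v y) := by
  have hx : (Sum.elim (Sum.elim a v) (Sum.elim b y) ∘ weierstrassPerm n₁ n₂ ι o) ∘ Sum.inl =
      fun i => Sum.elim a b (finSumFinEquiv.symm i) := by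
    ext i
    obtain ⟨j | j, rfl⟩ := finSumFinEquiv.surjective i <;> simp [weierstrassPerm]
  ext (i | i | i)
  · simp [fromBlocks_mulVec, hx]
  all_goals simp [fromBlocks_mulVec, weierstrassPerm]

theorem mulVec_mulVec_finSumFinEquiv_of_fromCols [Fintype o] {C : Matrix o (Fin (n₁ + n₂)) K}
    {P : Matrix (Fin (n₁ + n₂)) (Fin (n₁ + n₂)) K} {C₁ : Matrix o (Fin n₁) K}
    {C₂ : Matrix o (Fin n₂) K} (hC : (C * P).submatrix id finSumFinEquiv = fromCols C₁ C₂)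
    (a : Fin n₁ → K) (b : Fin n₂ → K) :
    C *ᵥ (P *ᵥ fun i => Sum.elim a b (finSumFinEquiv.symm i)) = C₁ *ᵥ a + C₂ *ᵥ b := by
  rw [mulVec_mulVec, ← fromCols_mulVec_sumElim, ← hC, submatrix_mulVec_equiv]
  rfl

end WeierstrassCoordinates

theorem dataMatrix_eq {n1 n2 s m p T : ℕ} {P : Matrix (Fin (n1 + n2)) (Fin (n1 + n2)) ℝ}
    {A1 : Matrix (Fin n1) (Fin n1) ℝ} {R : Matrix (Fin n2) (Fin n2) ℝ}
    {B1 : Matrix (Fin n1) (Fin m) ℝ} {B2 : Matrix (Fin n2) (Fin m) ℝ}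
    {C : Matrix (Fin p) (Fin (n1 + n2)) ℝ} {C1 : Matrix (Fin p) (Fin n1) ℝ}
    {C2 : Matrix (Fin p) (Fin n2) ℝ} (hR : R ^ s = 0)
    (hC : (C * P).submatrix id ⇑finSumFinEquiv = Matrix.fromCols C1 C2)
    {ud : ℕ → Fin m → ℝ} {z1d : ℕ → Fin n1 → ℝ} {z2d : ℕ → Fin n2 → ℝ}
    {xd : ℕ → Fin (n1 + n2) → ℝ} {yd : ℕ → Fin p → ℝ}
    (hz1 : ∀ k < T, z1d (k + 1) = A1 *ᵥ z1d k + B1 *ᵥ ud k)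
    (hz2 : ∀ k ≤ T, z2d k = -(∑ j ∈ Finset.range s, ((R ^ j * B2) *ᵥ ud (k + j))))
    (hxd : ∀ k ≤ T, xd k = P *ᵥ (fun i => Sum.elim (z1d k) (z2d k) (finSumFinEquiv.symm i)))
    (hyd : ∀ k ≤ T, yd k = C *ᵥ xd k) :
    fromRows (histMat T xd 0) (fromRows (histMat T ud 0) (histMat T yd 1)) =
      (fromBlocks P 0 0 1 :
        Matrix (Fin (n1 + n2) ⊕ (Fin m ⊕ Fin p)) (Fin (n1 + n2) ⊕ (Fin m ⊕ Fin p)) ℝ) *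
        (dataFactor A1 B1 R B2 C1 C2 s *
          (of fun k : Fin T => Sum.elim (Sum.elim (z1d k) (ud k)) (inputWindow s ud (k + 1)))ᵀ
          ).submatrix (weierstrassPerm n1 n2 (Fin m) (Fin p)) (Equiv.refl _) := by
  have hfast (k : ℕ) (hk : k ≤ T) :
      z2d k = -(controllabilityMatrix R B2 s *ᵥ inputWindow s ud k) := by
    rw [hz2 k hk, controllabilityMatrix_mulVec_inputWindow]
  have hcol (k : Fin T) : Sum.elim (xd k) (Sum.elim (ud k) (yd (k + 1))) =
      fromBlocks P 0 0 1 *ᵥ ((dataFactor A1 B1 R B2 C1 C2 s *ᵥ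
        Sum.elim (Sum.elim (z1d k) (ud k)) (inputWindow s ud (k + 1))) ∘
          weierstrassPerm n1 n2 (Fin m) (Fin p)) := by
    have hk := k.isLt
    rw [dataFactor_mulVec, ← controllabilityMatrix_mulVec_inputWindow_eq_add hR, ← hfast k hk.le,
      ← hz1 k hk, sub_eq_add_neg, ← mulVec_neg, ← hfast (k + 1) hk,
      ← mulVec_mulVec_finSumFinEquiv_of_fromCols hC, ← hxd (k + 1) hk, ← hyd (k + 1) hk,
      fromBlocks_mulVec_comp_weierstrassPerm, ← hxd k hk.le]
  calc _ = (of fun k : Fin T => Sum.elim (xd k) (Sum.elim (ud k) (yd (k + 1))))ᵀ := by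
        ext (i | i | i) k <;> rfl
    _ = _ := by
      rw [mul_transpose_of]
      simp only [funext hcol]
      rfl

theorem stmt_5_general (n1 n2 s m p T : ℕ)
    (C : Matrix (Fin p) (Fin (n1 + n2)) ℝ)
    (P : Matrix (Fin (n1 + n2)) (Fin (n1 + n2)) ℝ)
    (hP : IsUnit P)
    (A1 : Matrix (Fin n1) (Fin n1) ℝ) (R : Matrix (Fin n2) (Fin n2) ℝ)
    (B1 : Matrix (Fin n1) (Fin m) ℝ) (B2 : Matrix (Fin n2) (Fin m) ℝ)
    (C1 : Matrix (Fin p) (Fin n1) ℝ) (C2 : Matrix (Fin p) (Fin n2) ℝ)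
    (hR : R ^ s = 0)
    (hC : (C * P).submatrix id ⇑finSumFinEquiv = Matrix.fromCols C1 C2)
    (ud : ℕ → Fin m → ℝ) (z1d : ℕ → Fin n1 → ℝ) (z2d : ℕ → Fin n2 → ℝ)
    (xd : ℕ → Fin (n1 + n2) → ℝ) (yd : ℕ → Fin p → ℝ)
    (hz1 : ∀ k < T, z1d (k + 1) = A1 *ᵥ z1d k + B1 *ᵥ ud k)
    (hz2 : ∀ k ≤ T, z2d k = -(∑ j ∈ Finset.range s, ((R ^ j * B2) *ᵥ ud (k + j))))
    (hxd : ∀ k ≤ T, xd k = P *ᵥ (fun i => Sum.elim (z1d k) (z2d k) (finSumFinEquiv.symm i)))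
    (hyd : ∀ k ≤ T, yd k = C *ᵥ xd k)
    (hPE : (Matrix.of fun (i : Fin n1 ⊕ (Fin (s + 1) × Fin m)) (k : Fin T) =>
        Sum.elim (z1d (k : ℕ))
          (fun jl => ud ((k : ℕ) + (jl.1 : ℕ)) jl.2) i).rank = n1 + (s + 1) * m)
    :
    (Matrix.fromRows (histMat T xd 0)
      (Matrix.fromRows (histMat T ud 0) (histMat T yd 1))).rank
    = n1 + m + ((Matrix.fromRows R C2) *
        (Matrix.of fun (i : Fin n2) (jl : Fin s × Fin m) =>
          (R ^ (jl.1 : ℕ) * B2) i jl.2)).rank := by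
  set W := (of fun k : Fin T => Sum.elim (Sum.elim (z1d k) (ud k)) (inputWindow s ud (k + 1)))ᵀ
  have hW : W.rank = Fintype.card ((Fin n1 ⊕ Fin m) ⊕ Fin s × Fin m) := by
    have hshift : W = (of fun k : Fin T => Sum.elim (z1d k) (inputWindow (s + 1) ud k))ᵀ.submatrix
        (windowShiftEquiv (Fin n1) s (Fin m)) (Equiv.refl _) := by
      simp only [W, ← sumElim_inputWindow_comp_windowShiftEquiv]
      rfl
    rw [hshift, rank_submatrix]
    exact hPE.trans (by simp; ring)
  have hdet : IsUnit (fromBlocks P 0 0 1 :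
      Matrix (Fin (n1 + n2) ⊕ (Fin m ⊕ Fin p)) (Fin (n1 + n2) ⊕ (Fin m ⊕ Fin p)) ℝ).det := by
    simpa [det_fromBlocks_zero₂₁] using (isUnit_iff_isUnit_det P).mp hP
  rw [dataMatrix_eq hR hC hz1 hz2 hxd hyd, rank_mul_eq_right_of_isUnit_det _ _ hdet,
    rank_submatrix, rank_mul_eq_left_of_rank_eq_card _ _ hW, rank_dataFactor]
  simp [controllabilityMatrix]

theorem stmt_5 (n1 n2 s m p T : ℕ) (hs : 1 ≤ s) (hT : 1 ≤ T)
    (E A : Matrix (Fin (n1 + n2)) (Fin (n1 + n2)) ℝ)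
    (B : Matrix (Fin (n1 + n2)) (Fin m) ℝ)
    (C : Matrix (Fin p) (Fin (n1 + n2)) ℝ)
    (S P : Matrix (Fin (n1 + n2)) (Fin (n1 + n2)) ℝ)
    (hS : IsUnit S) (hP : IsUnit P)
    (A1 : Matrix (Fin n1) (Fin n1) ℝ) (R : Matrix (Fin n2) (Fin n2) ℝ)
    (B1 : Matrix (Fin n1) (Fin m) ℝ) (B2 : Matrix (Fin n2) (Fin m) ℝ)
    (C1 : Matrix (Fin p) (Fin n1) ℝ) (C2 : Matrix (Fin p) (Fin n2) ℝ)
    (hR : R ^ s = 0)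
    (hE : (S * E * P).submatrix ⇑finSumFinEquiv ⇑finSumFinEquiv = Matrix.fromBlocks 1 0 0 R)
    (hA : (S * A * P).submatrix ⇑finSumFinEquiv ⇑finSumFinEquiv = Matrix.fromBlocks A1 0 0 1)
    (hB : (S * B).submatrix ⇑finSumFinEquiv id = Matrix.fromRows B1 B2)
    (hC : (C * P).submatrix id ⇑finSumFinEquiv = Matrix.fromCols C1 C2)
    (ud : ℕ → Fin m → ℝ) (z1d : ℕ → Fin n1 → ℝ) (z2d : ℕ → Fin n2 → ℝ)
    (xd : ℕ → Fin (n1 + n2) → ℝ) (yd : ℕ → Fin p → ℝ)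
    (hz1 : ∀ k < T, z1d (k + 1) = A1 *ᵥ z1d k + B1 *ᵥ ud k)
    (hz2 : ∀ k ≤ T, z2d k = -(∑ j ∈ Finset.range s, ((R ^ j * B2) *ᵥ ud (k + j))))
    (hxd : ∀ k ≤ T, xd k = P *ᵥ (fun i => Sum.elim (z1d k) (z2d k) (finSumFinEquiv.symm i)))
    (hyd : ∀ k ≤ T, yd k = C *ᵥ xd k)
    (hPE : (Matrix.of fun (i : Fin n1 ⊕ (Fin (s + 1) × Fin m)) (k : Fin T) =>
        Sum.elim (z1d (k : ℕ))
          (fun jl => ud ((k : ℕ) + (jl.1 : ℕ)) jl.2) i).rank = n1 + (s + 1) * m)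
    :
    (Matrix.fromRows (histMat T xd 0)
      (Matrix.fromRows (histMat T ud 0) (histMat T yd 1))).rank
    = n1 + m + ((Matrix.fromRows R C2) *
        (Matrix.of fun (i : Fin n2) (jl : Fin s × Fin m) =>
          (R ^ (jl.1 : ℕ) * B2) i jl.2)).rank :=
  stmt_5_general n1 n2 s m p T C P hP A1 R B1 B2 C1 C2 hR hC ud z1d z2d xd yd hz1 hz2 hxd hyd hPE
end
end

section
/- Under the unknown-input Weierstrass decomposition, unknown-input historical data, and unknown-input persistent excitation hypotheses, a triple of sequences u : ℕ → ℝ^m, x : ℕ → ℝ^n, y : ℕ → ℝ^p is a trajectory of the unknown-input descriptor system (i.e. there exists η : ℕ → ℝ^q with E x(k+1) = A x(k) + B u(k) + F η(k) and y(k) = C x(k) for all k ∈ ℕ) if and only if for every k ∈ ℕ the stacked vector col(x(k), x(k+1), u(k), y(k), y(k+1)) lies in the column space of the stacked data matrix col(X_p, X_f, U_p, Y_p, Y_f). -/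
open Matrix

noncomputable section

open Finset

/-!
In Weierstrass coordinates `x = P · col(z₁, z₂)` the descriptor equation splits into the slow
recursion `z₁(k+1) = A₁ z₁(k) + B₁ u(k) + F₁ η(k)` and the fast relation
`R z₂(k+1) = z₂(k) + B₂ u(k) + F₂ η(k)`. Since `R` is nilpotent the latter has the single solution
`z₂(k) = -∑_{j<s} Rʲ (B₂ u(k+j) + F₂ η(k+j))`, so `x(k), x(k+1)` depend linearly on `z₁(k)` and
on the input window `u, η` over `[k, k+s]`.

The data obey the same linear relations column by column; hence every combination `g` of data
columns is again a piece of trajectory, whose unknown input is the same combination of the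
`η_d` (sufficiency).
Conversely, persistent excitation says that the data matrix of slow states and input windows has
full row rank, so some `g` reproduces `z₁(k)` and the window at `k` of a given trajectory, and then
it reproduces `x(k), x(k+1), u(k), y(k), y(k+1)` as well (necessity).
-/

section HankelMatrix

variable {ι κ : Type} {T : ℕ}

theorem histMat_congr {f f' : ℕ → ι → ℝ} {off off' : ℕ}
    (h : ∀ k < T, f (k + off) = f' (k + off')) : histMat T f off = histMat T f' off' := by
  ext i c
  simp [histMat, h c c.isLt]

theorem histMat_add (f f' : ℕ → ι → ℝ) (off : ℕ) :
    histMat T (fun k => f k + f' k) off = histMat T f off + histMat T f' off := rfl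

theorem histMat_neg (f : ℕ → ι → ℝ) (off : ℕ) :
    histMat T (fun k => -f k) off = -histMat T f off := rfl

theorem histMat_sum {σ : Type} (t : Finset σ) (f : σ → ℕ → ι → ℝ) (off : ℕ) :
    histMat T (fun k => ∑ j ∈ t, f j k) off = ∑ j ∈ t, histMat T (f j) off := by
  ext i c
  simp [histMat, Matrix.sum_apply]

theorem histMat_mulVec_eq_mul [Fintype κ] (M : Matrix ι κ ℝ) (f : ℕ → κ → ℝ) (off : ℕ) :
    histMat T (fun k => M *ᵥ f k) off = M * histMat T f off := by
  ext i c
  simp [histMat, mulVec, dotProduct, mul_apply]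

theorem histMat_shift (f : ℕ → ι → ℝ) (j off : ℕ) :
    histMat T (fun k => f (k + j)) off = histMat T f (off + j) := by
  ext i c
  simp [histMat, add_assoc]

theorem histMat_mulVec_sumElim {α β : Type} (e : α ⊕ β ≃ ι) (a : ℕ → α → ℝ) (b : ℕ → β → ℝ)
    (off : ℕ) (g : Fin T → ℝ) :
    histMat T (fun k => Sum.elim (a k) (b k) ∘ e.symm) off *ᵥ g
      = Sum.elim (histMat T a off *ᵥ g) (histMat T b off *ᵥ g) ∘ e.symm := by
  ext i
  rcases h : e.symm i with j | j <;> simp [histMat, mulVec, dotProduct, h]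

end HankelMatrix

section FastSubsystem

variable {K ι : Type*} [CommRing K] [Fintype ι] [DecidableEq ι] (R : Matrix ι ι K)

def fastResponse (s : ℕ) (w : ℕ → ι → K) (k : ℕ) : ι → K :=
  -∑ j ∈ range s, R ^ j *ᵥ w (k + j)

theorem mulVec_fastResponse_succ {s : ℕ} (hR : R ^ s = 0) (w : ℕ → ι → K) (k : ℕ) :
    R *ᵥ fastResponse R s w (k + 1) = fastResponse R s w k + w k := by
  have hsum := sum_range_succ' (fun j => R ^ j *ᵥ w (k + j)) s
  rw [sum_range_succ, hR, zero_mulVec, add_zero] at hsum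
  simp only [fastResponse, mulVec_neg, mulVec_sum, mulVec_mulVec, ← pow_succ', hsum]
  simp [add_right_comm k 1, add_assoc]

theorem eq_pow_mulVec_add_fastResponse {z w : ℕ → ι → K}
    (h : ∀ k, R *ᵥ z (k + 1) = z k + w k) (k t : ℕ) :
    z k = R ^ t *ᵥ z (k + t) + fastResponse R t w k := by
  induction t with
  | zero => simp [fastResponse]
  | succ t ih =>
    rw [ih, ← add_assoc k t 1, pow_succ, ← mulVec_mulVec, h]
    simp only [fastResponse, sum_range_succ, mulVec_add]
    abel

theorem eq_fastResponse {s : ℕ} (hR : R ^ s = 0) {z w : ℕ → ι → K}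
    (h : ∀ k, R *ᵥ z (k + 1) = z k + w k) (k : ℕ) : z k = fastResponse R s w k := by
  simpa [hR] using eq_pow_mulVec_add_fastResponse R h k s

end FastSubsystem

theorem histMat_fastResponse {ι : Type} [Fintype ι] [DecidableEq ι] {T : ℕ} (R : Matrix ι ι ℝ)
    (s : ℕ) (w : ℕ → ι → ℝ) (off : ℕ) :
    histMat T (fastResponse R s w) off = -∑ j ∈ range s, R ^ j * histMat T w (off + j) := by
  unfold fastResponse
  simp only [histMat_neg, histMat_sum, histMat_mulVec_eq_mul, histMat_shift]

section BlockCoordinates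

variable {K ι ι₁ ι₂ : Type*} [Field K] [Fintype ι] [DecidableEq ι]

theorem exists_eq_mulVec_sumElim {P : Matrix ι ι K} (hP : IsUnit P) (e : ι₁ ⊕ ι₂ ≃ ι)
    (x : ι → K) : ∃ a b, x = P *ᵥ (Sum.elim a b ∘ e.symm) := by
  obtain ⟨v, rfl⟩ := mulVec_surjective_iff_isUnit.2 hP x
  refine ⟨v ∘ e ∘ Sum.inl, v ∘ e ∘ Sum.inr, ?_⟩
  rw [← Function.comp_assoc, ← Function.comp_assoc, Sum.elim_comp_inl_inr, Function.comp_assoc,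
    e.self_comp_symm, Function.comp_id]

theorem mulVec_eq_submatrix_mulVec_comp {α β γ : Type*} [Fintype β] (M : Matrix α β K)
    (e : γ ≃ α) (w : β → K) : M *ᵥ w = (M.submatrix e id *ᵥ w) ∘ e.symm := by
  ext; simp [mulVec, dotProduct]

theorem descriptor_step_iff {μ κ : Type*} [Fintype ι₁] [Fintype ι₂] [DecidableEq ι₁]
    [DecidableEq ι₂] [Fintype μ] [Fintype κ] {E A S P : Matrix ι ι K} {B : Matrix ι μ K}
    {F : Matrix ι κ K} {A1 : Matrix ι₁ ι₁ K} {R : Matrix ι₂ ι₂ K} {B1 : Matrix ι₁ μ K}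
    {B2 : Matrix ι₂ μ K} {F1 : Matrix ι₁ κ K} {F2 : Matrix ι₂ κ K} {e : ι₁ ⊕ ι₂ ≃ ι}
    (hS : IsUnit S)
    (hE : (S * E * P).submatrix e e = fromBlocks 1 0 0 R)
    (hA : (S * A * P).submatrix e e = fromBlocks A1 0 0 1)
    (hB : (S * B).submatrix e id = fromRows B1 B2)
    (hF : (S * F).submatrix e id = fromRows F1 F2)
    (a a' : ι₁ → K) (b b' : ι₂ → K) (u : μ → K) (η : κ → K) :
    E *ᵥ (P *ᵥ (Sum.elim a' b' ∘ e.symm))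
        = A *ᵥ (P *ᵥ (Sum.elim a b ∘ e.symm)) + B *ᵥ u + F *ᵥ η ↔
      a' = A1 *ᵥ a + B1 *ᵥ u + F1 *ᵥ η ∧ R *ᵥ b' = b + B2 *ᵥ u + F2 *ᵥ η := by
  have hsquare : ∀ (M : Matrix ι ι K) (v : ι₁ ⊕ ι₂ → K),
      S *ᵥ (M *ᵥ (P *ᵥ (v ∘ e.symm))) = ((S * M * P).submatrix e e *ᵥ v) ∘ e.symm := by
    intro M v
    rw [submatrix_mulVec_equiv, mulVec_mulVec, mulVec_mulVec, Matrix.mul_assoc]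
    ext; simp
  rw [← (mulVec_injective_iff_isUnit.2 hS).eq_iff, mulVec_add, mulVec_add, hsquare, hsquare,
    hE, hA, mulVec_mulVec, mulVec_mulVec, mulVec_eq_submatrix_mulVec_comp (S * B) e,
    mulVec_eq_submatrix_mulVec_comp (S * F) e, hB, hF, ← Pi.add_comp, ← Pi.add_comp,
    e.symm.surjective.injective_comp_right.eq_iff]
  simp [fromBlocks_mulVec, fromRows_mulVec, ← Sum.elim_add_add, Sum.elim_eq_iff, add_assoc]

theorem mulVec_surjective_of_rank_eq_card {m n : Type*} [Fintype m] [Fintype n]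
    (M : Matrix m n K) (h : M.rank = Fintype.card m) : Function.Surjective M.mulVec := by
  have : LinearMap.range M.mulVecLin = ⊤ :=
    Submodule.eq_top_of_finrank_eq (by rwa [Module.finrank_fintype_fun_eq_card])
  exact LinearMap.range_eq_top.1 this

end BlockCoordinates

section DescriptorData

variable {T : ℕ}

theorem histMat_eq_mul_histMat {ι κ : Type} [Fintype κ] {C : Matrix ι κ ℝ} {xd : ℕ → κ → ℝ}
    {yd : ℕ → ι → ℝ} (hyd : ∀ k ≤ T, yd k = C *ᵥ xd k) {off : ℕ} (hoff : off ≤ 1) :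
    histMat T yd off = C * histMat T xd off := by
  rw [← histMat_mulVec_eq_mul]
  exact histMat_congr fun k hk => hyd _ (by omega)

theorem histMat_mulVec_eq_mulVec_sumElim {ι ι₁ ι₂ : Type} [Fintype ι] {P : Matrix ι ι ℝ}
    {e : ι₁ ⊕ ι₂ ≃ ι} {xd : ℕ → ι → ℝ} {z1d : ℕ → ι₁ → ℝ} {z2d : ℕ → ι₂ → ℝ}
    (hxd : ∀ k ≤ T, xd k = P *ᵥ (Sum.elim (z1d k) (z2d k) ∘ e.symm)) {off : ℕ} (hoff : off ≤ 1)
    (g : Fin T → ℝ) :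
    histMat T xd off *ᵥ g
      = P *ᵥ (Sum.elim (histMat T z1d off *ᵥ g) (histMat T z2d off *ᵥ g) ∘ e.symm) := by
  rw [histMat_congr (off' := off) (f' := fun k => P *ᵥ (Sum.elim (z1d k) (z2d k) ∘ e.symm))
    fun c hc => hxd _ (by omega), histMat_mulVec_eq_mul, ← mulVec_mulVec, histMat_mulVec_sumElim]

theorem exists_histMat_mulVec_eq_window {ι μ κ : Type} [Fintype ι] [Fintype μ] [Fintype κ]
    {s : ℕ} {z1d : ℕ → ι → ℝ} {ud : ℕ → μ → ℝ} {etad : ℕ → κ → ℝ}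
    (hPE : (Matrix.of fun (i : ι ⊕ (Fin (s + 1) × (μ ⊕ κ))) (k : Fin T) =>
        Sum.elim (z1d (k : ℕ))
          (fun jl => Sum.elim (ud ((k : ℕ) + (jl.1 : ℕ))) (etad ((k : ℕ) + (jl.1 : ℕ))) jl.2)
          i).rank = Fintype.card (ι ⊕ (Fin (s + 1) × (μ ⊕ κ))))
    (z : ι → ℝ) (u : ℕ → μ → ℝ) (η : ℕ → κ → ℝ) :
    ∃ g, histMat T z1d 0 *ᵥ g = z ∧
      ∀ j ≤ s, histMat T ud j *ᵥ g = u j ∧ histMat T etad j *ᵥ g = η j := by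
  obtain ⟨g, hg⟩ := mulVec_surjective_of_rank_eq_card _ hPE
    (Sum.elim z fun jl => Sum.elim (u jl.1) (η jl.1) jl.2)
  refine ⟨g, ?_, fun j hj => ⟨?_, ?_⟩⟩ <;> ext i
  · simpa [histMat, mulVec, dotProduct] using congrFun hg (Sum.inl i)
  · simpa [histMat, mulVec, dotProduct] using congrFun hg (Sum.inr (⟨j, by omega⟩, Sum.inl i))
  · simpa [histMat, mulVec, dotProduct] using congrFun hg (Sum.inr (⟨j, by omega⟩, Sum.inr i))

theorem trajectory_of_forall_exists_histMat {ι μ κ ρ : Type} [Fintype ι] [Fintype μ]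
    [Fintype κ] {E A : Matrix ι ι ℝ} {B : Matrix ι μ ℝ} {F : Matrix ι κ ℝ} {C : Matrix ρ ι ℝ}
    {xd : ℕ → ι → ℝ} {ud : ℕ → μ → ℝ} {etad : ℕ → κ → ℝ} {yd : ℕ → ρ → ℝ}
    (hdata : ∀ k < T, E *ᵥ xd (k + 1) = A *ᵥ xd k + B *ᵥ ud k + F *ᵥ etad k)
    (hyd : ∀ k ≤ T, yd k = C *ᵥ xd k)
    {u : ℕ → μ → ℝ} {x : ℕ → ι → ℝ} {y : ℕ → ρ → ℝ}
    (h : ∀ k : ℕ, ∃ g : Fin T → ℝ,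
      histMat T xd 0 *ᵥ g = x k ∧ histMat T xd 1 *ᵥ g = x (k + 1) ∧
      histMat T ud 0 *ᵥ g = u k ∧ histMat T yd 0 *ᵥ g = y k ∧ histMat T yd 1 *ᵥ g = y (k + 1)) :
    (∃ η : ℕ → κ → ℝ, ∀ k, E *ᵥ x (k + 1) = A *ᵥ x k + B *ᵥ u k + F *ᵥ η k) ∧
      ∀ k, y k = C *ᵥ x k := by
  have hdataMat : E * histMat T xd 1
      = A * histMat T xd 0 + B * histMat T ud 0 + F * histMat T etad 0 := by
    simp only [← histMat_mulVec_eq_mul, ← histMat_add]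
    exact histMat_congr hdata
  choose g hx0 hx1 hu hy0 _ using h
  refine ⟨⟨fun k => histMat T etad 0 *ᵥ g k, fun k => ?_⟩, fun k => ?_⟩
  · rw [← hx1, ← hx0, ← hu, mulVec_mulVec, hdataMat]
    simp only [add_mulVec, mulVec_mulVec]
  · rw [← hy0, ← hx0, histMat_eq_mul_histMat hyd zero_le_one, mulVec_mulVec]

theorem exists_histMat_mulVec_eq_of_blocks {ι₁ ι₂ μ κ : Type} [Fintype ι₁] [Fintype ι₂]
    [DecidableEq ι₂] [Fintype μ] [Fintype κ] {s : ℕ}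
    {A1 : Matrix ι₁ ι₁ ℝ} {R : Matrix ι₂ ι₂ ℝ} {B1 : Matrix ι₁ μ ℝ} {B2 : Matrix ι₂ μ ℝ}
    {F1 : Matrix ι₁ κ ℝ} {F2 : Matrix ι₂ κ ℝ}
    {ud : ℕ → μ → ℝ} {etad : ℕ → κ → ℝ} {z1d : ℕ → ι₁ → ℝ} {z2d : ℕ → ι₂ → ℝ}
    (hz1d : ∀ k < T, z1d (k + 1) = A1 *ᵥ z1d k + B1 *ᵥ ud k + F1 *ᵥ etad k)
    (hz2d : ∀ k ≤ T, z2d k = fastResponse R s (fun j => B2 *ᵥ ud j + F2 *ᵥ etad j) k)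
    (hPE : (Matrix.of fun (i : ι₁ ⊕ (Fin (s + 1) × (μ ⊕ κ))) (k : Fin T) =>
        Sum.elim (z1d (k : ℕ))
          (fun jl => Sum.elim (ud ((k : ℕ) + (jl.1 : ℕ))) (etad ((k : ℕ) + (jl.1 : ℕ))) jl.2)
          i).rank = Fintype.card (ι₁ ⊕ (Fin (s + 1) × (μ ⊕ κ))))
    {u : ℕ → μ → ℝ} {η : ℕ → κ → ℝ} {z1 : ℕ → ι₁ → ℝ} {z2 : ℕ → ι₂ → ℝ}
    (hz1 : ∀ k, z1 (k + 1) = A1 *ᵥ z1 k + B1 *ᵥ u k + F1 *ᵥ η k)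
    (hz2 : ∀ k, z2 k = fastResponse R s (fun j => B2 *ᵥ u j + F2 *ᵥ η j) k) (k : ℕ) :
    ∃ g : Fin T → ℝ, histMat T ud 0 *ᵥ g = u k ∧ ∀ off ≤ 1,
      histMat T z1d off *ᵥ g = z1 (k + off) ∧ histMat T z2d off *ᵥ g = z2 (k + off) := by
  obtain ⟨g, hg1, hgw⟩ := exists_histMat_mulVec_eq_window hPE (z1 k)
    (fun j => u (k + j)) (fun j => η (k + j))
  obtain ⟨hu0, hη0⟩ := hgw 0 (Nat.zero_le s)
  have hslow : histMat T z1d 1 *ᵥ g = z1 (k + 1) := by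
    rw [histMat_congr (off' := 0)
      (f' := fun c => A1 *ᵥ z1d c + B1 *ᵥ ud c + F1 *ᵥ etad c) hz1d]
    simp only [histMat_add, histMat_mulVec_eq_mul, add_mulVec, ← mulVec_mulVec, hg1, hu0, hη0,
      hz1, add_zero]
  have hfast : ∀ off ≤ 1, histMat T z2d off *ᵥ g = z2 (k + off) := by
    intro off hoff
    rw [histMat_congr (off' := off) fun c hc => hz2d _ (by omega), histMat_fastResponse, hz2]
    simp only [fastResponse, neg_mulVec, sum_mulVec, ← mulVec_mulVec, histMat_add,
      histMat_mulVec_eq_mul, add_mulVec]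
    congr 1
    refine sum_congr rfl fun j hj => ?_
    have hj' : off + j ≤ s := by rw [mem_range] at hj; omega
    rw [(hgw _ hj').1, (hgw _ hj').2, add_assoc]
  refine ⟨g, by simpa using hu0, fun off hoff => ?_⟩
  interval_cases off
  · simpa [hg1] using hfast 0 zero_le_one
  · exact ⟨hslow, hfast 1 le_rfl⟩

end DescriptorData

theorem stmt_9_general (n1 n2 s m p q T : ℕ)
    (E A : Matrix (Fin (n1 + n2)) (Fin (n1 + n2)) ℝ)
    (B : Matrix (Fin (n1 + n2)) (Fin m) ℝ)
    (F : Matrix (Fin (n1 + n2)) (Fin q) ℝ)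
    (C : Matrix (Fin p) (Fin (n1 + n2)) ℝ)
    (S P : Matrix (Fin (n1 + n2)) (Fin (n1 + n2)) ℝ)
    (hS : IsUnit S) (hP : IsUnit P)
    (A1 : Matrix (Fin n1) (Fin n1) ℝ) (R : Matrix (Fin n2) (Fin n2) ℝ)
    (B1 : Matrix (Fin n1) (Fin m) ℝ) (B2 : Matrix (Fin n2) (Fin m) ℝ)
    (F1 : Matrix (Fin n1) (Fin q) ℝ) (F2 : Matrix (Fin n2) (Fin q) ℝ)
    (hR : R ^ s = 0)
    (hE : (S * E * P).submatrix ⇑finSumFinEquiv ⇑finSumFinEquiv = Matrix.fromBlocks 1 0 0 R)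
    (hA : (S * A * P).submatrix ⇑finSumFinEquiv ⇑finSumFinEquiv = Matrix.fromBlocks A1 0 0 1)
    (hB : (S * B).submatrix ⇑finSumFinEquiv id = Matrix.fromRows B1 B2)
    (hFdec : (S * F).submatrix ⇑finSumFinEquiv id = Matrix.fromRows F1 F2)
    (ud : ℕ → Fin m → ℝ) (etad : ℕ → Fin q → ℝ)
    (z1d : ℕ → Fin n1 → ℝ) (z2d : ℕ → Fin n2 → ℝ)
    (xd : ℕ → Fin (n1 + n2) → ℝ) (yd : ℕ → Fin p → ℝ)
    (hz1 : ∀ k < T, z1d (k + 1) = A1 *ᵥ z1d k + B1 *ᵥ ud k + F1 *ᵥ etad k)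
    (hz2 : ∀ k ≤ T, z2d k
      = -(∑ j ∈ Finset.range s, (R ^ j *ᵥ (B2 *ᵥ ud (k + j) + F2 *ᵥ etad (k + j)))))
    (hxd : ∀ k ≤ T, xd k = P *ᵥ (fun i => Sum.elim (z1d k) (z2d k) (finSumFinEquiv.symm i)))
    (hyd : ∀ k ≤ T, yd k = C *ᵥ xd k)
    (hPE : (Matrix.of fun (i : Fin n1 ⊕ (Fin (s + 1) × (Fin m ⊕ Fin q))) (k : Fin T) =>
        Sum.elim (z1d (k : ℕ))
          (fun jl => Sum.elim (ud ((k : ℕ) + (jl.1 : ℕ))) (etad ((k : ℕ) + (jl.1 : ℕ))) jl.2)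
          i).rank = n1 + (s + 1) * (m + q))
    (u : ℕ → Fin m → ℝ) (x : ℕ → Fin (n1 + n2) → ℝ) (y : ℕ → Fin p → ℝ) :
    ((∃ η : ℕ → Fin q → ℝ,
        ∀ k : ℕ, E *ᵥ x (k + 1) = A *ᵥ x k + B *ᵥ u k + F *ᵥ η k) ∧
      (∀ k : ℕ, y k = C *ᵥ x k))
      ↔ (∀ k : ℕ, ∃ g : Fin T → ℝ,
          histMat T xd 0 *ᵥ g = x k ∧
          histMat T xd 1 *ᵥ g = x (k + 1) ∧
          histMat T ud 0 *ᵥ g = u k ∧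
          histMat T yd 0 *ᵥ g = y k ∧
          histMat T yd 1 *ᵥ g = y (k + 1)) := by
  have hstep := descriptor_step_iff hS hE hA hB hFdec
  have hz2d : ∀ k ≤ T, z2d k = fastResponse R s (fun j => B2 *ᵥ ud j + F2 *ᵥ etad j) k := hz2
  have hdata : ∀ k < T, E *ᵥ xd (k + 1) = A *ᵥ xd k + B *ᵥ ud k + F *ᵥ etad k := by
    intro k hk
    rw [hxd (k + 1) hk, hxd k hk.le]
    refine (hstep ..).2 ⟨hz1 k hk, ?_⟩
    rw [hz2d (k + 1) hk, hz2d k hk.le, mulVec_fastResponse_succ R hR, add_assoc]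
  refine ⟨fun ⟨⟨η, hdyn⟩, hout⟩ k => ?_, trajectory_of_forall_exists_histMat hdata hyd⟩
  choose z1 z2 hx using fun k => exists_eq_mulVec_sumElim hP finSumFinEquiv (x k)
  have hblocks : ∀ k, z1 (k + 1) = A1 *ᵥ z1 k + B1 *ᵥ u k + F1 *ᵥ η k ∧
      R *ᵥ z2 (k + 1) = z2 k + B2 *ᵥ u k + F2 *ᵥ η k := fun k =>
    (hstep ..).1 (by rw [← hx, ← hx]; exact hdyn k)
  obtain ⟨g, hu, hz⟩ := exists_histMat_mulVec_eq_of_blocks hz1 hz2d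
    (by simpa using hPE) (fun k => (hblocks k).1)
    (eq_fastResponse R hR fun k => by rw [(hblocks k).2, add_assoc]) k
  have hX : ∀ off ≤ 1, histMat T xd off *ᵥ g = x (k + off) := fun off hoff => by
    rw [histMat_mulVec_eq_mulVec_sumElim hxd hoff, (hz off hoff).1, (hz off hoff).2, hx]
  have hY : ∀ off ≤ 1, histMat T yd off *ᵥ g = y (k + off) := fun off hoff => by
    rw [histMat_eq_mul_histMat hyd hoff, ← mulVec_mulVec, hX off hoff, hout]
  exact ⟨g, hX 0 zero_le_one, hX 1 le_rfl, hu, hY 0 zero_le_one, hY 1 le_rfl⟩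

theorem stmt_9 (n1 n2 s m p q T : ℕ) (hs : 1 ≤ s) (hT : 1 ≤ T)
    (E A : Matrix (Fin (n1 + n2)) (Fin (n1 + n2)) ℝ)
    (B : Matrix (Fin (n1 + n2)) (Fin m) ℝ)
    (F : Matrix (Fin (n1 + n2)) (Fin q) ℝ) (hF : F.rank = q)
    (C : Matrix (Fin p) (Fin (n1 + n2)) ℝ)
    (S P : Matrix (Fin (n1 + n2)) (Fin (n1 + n2)) ℝ)
    (hS : IsUnit S) (hP : IsUnit P)
    (A1 : Matrix (Fin n1) (Fin n1) ℝ) (R : Matrix (Fin n2) (Fin n2) ℝ)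
    (B1 : Matrix (Fin n1) (Fin m) ℝ) (B2 : Matrix (Fin n2) (Fin m) ℝ)
    (F1 : Matrix (Fin n1) (Fin q) ℝ) (F2 : Matrix (Fin n2) (Fin q) ℝ)
    (C1 : Matrix (Fin p) (Fin n1) ℝ) (C2 : Matrix (Fin p) (Fin n2) ℝ)
    (hR : R ^ s = 0)
    (hE : (S * E * P).submatrix ⇑finSumFinEquiv ⇑finSumFinEquiv = Matrix.fromBlocks 1 0 0 R)
    (hA : (S * A * P).submatrix ⇑finSumFinEquiv ⇑finSumFinEquiv = Matrix.fromBlocks A1 0 0 1)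
    (hB : (S * B).submatrix ⇑finSumFinEquiv id = Matrix.fromRows B1 B2)
    (hFdec : (S * F).submatrix ⇑finSumFinEquiv id = Matrix.fromRows F1 F2)
    (hC : (C * P).submatrix id ⇑finSumFinEquiv = Matrix.fromCols C1 C2)
    (ud : ℕ → Fin m → ℝ) (etad : ℕ → Fin q → ℝ)
    (z1d : ℕ → Fin n1 → ℝ) (z2d : ℕ → Fin n2 → ℝ)
    (xd : ℕ → Fin (n1 + n2) → ℝ) (yd : ℕ → Fin p → ℝ)
    (hz1 : ∀ k < T, z1d (k + 1) = A1 *ᵥ z1d k + B1 *ᵥ ud k + F1 *ᵥ etad k)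
    (hz2 : ∀ k ≤ T, z2d k
      = -(∑ j ∈ Finset.range s, (R ^ j *ᵥ (B2 *ᵥ ud (k + j) + F2 *ᵥ etad (k + j)))))
    (hxd : ∀ k ≤ T, xd k = P *ᵥ (fun i => Sum.elim (z1d k) (z2d k) (finSumFinEquiv.symm i)))
    (hyd : ∀ k ≤ T, yd k = C *ᵥ xd k)
    (hPE : (Matrix.of fun (i : Fin n1 ⊕ (Fin (s + 1) × (Fin m ⊕ Fin q))) (k : Fin T) =>
        Sum.elim (z1d (k : ℕ))
          (fun jl => Sum.elim (ud ((k : ℕ) + (jl.1 : ℕ))) (etad ((k : ℕ) + (jl.1 : ℕ))) jl.2)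
          i).rank = n1 + (s + 1) * (m + q))
    (u : ℕ → Fin m → ℝ) (x : ℕ → Fin (n1 + n2) → ℝ) (y : ℕ → Fin p → ℝ) :
    ((∃ η : ℕ → Fin q → ℝ,
        ∀ k : ℕ, E *ᵥ x (k + 1) = A *ᵥ x k + B *ᵥ u k + F *ᵥ η k) ∧
      (∀ k : ℕ, y k = C *ᵥ x k))
      ↔ (∀ k : ℕ, ∃ g : Fin T → ℝ,
          histMat T xd 0 *ᵥ g = x k ∧
          histMat T xd 1 *ᵥ g = x (k + 1) ∧
          histMat T ud 0 *ᵥ g = u k ∧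
          histMat T yd 0 *ᵥ g = y k ∧
          histMat T yd 1 *ᵥ g = y (k + 1)) :=
  stmt_9_general n1 n2 s m p q T E A B F C S P hS hP A1 R B1 B2 F1 F2 hR hE hA hB hFdec ud etad z1d
    z2d xd yd hz1 hz2 hxd hyd hPE u x y
end
end
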